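/- Anticommutation lemma. With the notation of the decomposition lemma — (𝔤, 𝔥, B) a complex quadratic pair, orthonormal bases (Xᵢ) of 𝔥^⊥ and (Yⱼ) of 𝔥, φ : C(𝔥^⊥) → C(𝔤) and ψ : C(𝔥) → C(𝔤) the homomorphisms induced by the isometric inclusions, D' = Σᵢ Xᵢ ⊗ φ(Xᵢ) + 1 ⊗ φ(v_{𝔤/𝔥}) and D'' = Σⱼ (Yⱼ ⊗ 1 + 1 ⊗ φ(ν(Yⱼ)))·(1 ⊗ ψ(Yⱼ)) + 1 ⊗ ψ(v_𝔥) in U(𝔤) ⊗ C(𝔤) — the two components anticommute: D'·D'' + D''·D' = 0. -/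

import Mathlib

open CliffordAlgebra TensorProduct

/-- The quadratic form `x ↦ B(x,x)` restricted to a subspace `W`. -/
noncomputable def restrictedQF {L : Type*} [AddCommGroup L] [Module ℂ L]
    (B : LinearMap.BilinForm ℂ L) (W : Submodule ℂ L) : QuadraticForm ℂ W :=
  B.toQuadraticMap.comp W.subtype

/-- The inclusion `W ↪ L` as an isometry of quadratic forms. -/
noncomputable def inclIsometry {L : Type*} [AddCommGroup L] [Module ℂ L]
    (B : LinearMap.BilinForm ℂ L) (W : Submodule ℂ L) :
    (restrictedQF B W) →qᵢ B.toQuadraticMap :=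
  { toLinearMap := W.subtype
    map_app' := fun _ => rfl }

/-!
Expand `D'·D'' + D''·D'` bilinearly. Since `𝔥 ⊥ 𝔥^⊥`, the Clifford generators coming from `𝔥`
and from `𝔥^⊥` anticommute; hence `v_{𝔤/𝔥}` anticommutes with every `ψ(Yⱼ)` and with `ψ(v_𝔥)`,
and every `φ(Xᵢ)` anticommutes with `ψ(v_𝔥)`. The element `ν(y)` implements `ad y` on `φ(𝔥^⊥)`
by commutators, so it commutes with `v_{𝔤/𝔥}`, whose coefficient 3-form `B(a, [b, c])` is
`ad 𝔥`-invariant. The remaining terms are, for each `j`,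
`-Σᵢ ([Yⱼ, Xᵢ] ⊗ Xᵢ Yⱼ + Xᵢ ⊗ [Yⱼ, Xᵢ] Yⱼ)`, which vanishes because the Casimir tensor
`Σᵢ Xᵢ ⊗ Xᵢ` of `𝔥^⊥` is killed by the `B`-skew endomorphism `ad Yⱼ`.
-/

def AntiCommute {A : Type*} [Ring A] (a b : A) : Prop := a * b + b * a = 0

namespace AntiCommute

variable {A : Type*} [Ring A] {a b c : A}

theorem symm (h : AntiCommute a b) : AntiCommute b a := by
  rwa [AntiCommute, add_comm]

theorem zero_right (a : A) : AntiCommute a 0 := by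
  simp [AntiCommute]

theorem add_right (hb : AntiCommute a b) (hc : AntiCommute a c) : AntiCommute a (b + c) := by
  rw [AntiCommute, mul_add, add_mul, add_add_add_comm, hb, hc, add_zero]

theorem add_left (ha : AntiCommute a c) (hb : AntiCommute b c) : AntiCommute (a + b) c :=
  (add_right ha.symm hb.symm).symm

theorem sum_right {ι : Type*} (s : Finset ι) {f : ι → A} (h : ∀ i ∈ s, AntiCommute a (f i)) :
    AntiCommute a (∑ i ∈ s, f i) :=
  Finset.sum_induction f (AntiCommute a) (fun _ _ => add_right) (zero_right a) h

theorem smul_right {R : Type*} [CommSemiring R] [Algebra R A] (r : R) (h : AntiCommute a b) :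
    AntiCommute a (r • b) := by
  rw [AntiCommute, mul_smul_comm, smul_mul_assoc, ← smul_add, h, smul_zero]

theorem commute_mul_right (hb : AntiCommute a b) (hc : AntiCommute a c) : Commute a (b * c) := by
  have hb' : a * b = -(b * a) := eq_neg_of_add_eq_zero_left hb
  have hc' : a * c = -(c * a) := eq_neg_of_add_eq_zero_left hc
  calc a * (b * c) = -(b * (a * c)) := by rw [← mul_assoc, hb', neg_mul, mul_assoc]
    _ = b * c * a := by rw [hc', mul_neg, neg_neg, mul_assoc]

end AntiCommute

theorem Commute.antiCommute_mul_right {A : Type*} [Ring A] {a b c : A} (hb : Commute a b)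
    (hc : AntiCommute a c) : AntiCommute a (b * c) := by
  rw [AntiCommute, ← mul_assoc, hb.eq, mul_assoc, mul_assoc, ← mul_add, hc, mul_zero]

theorem Commute.antiCommute_tmul {R A C : Type*} [CommRing R] [Ring A] [Algebra R A] [Ring C]
    [Algebra R C] {a b : A} {x y : C} (hab : Commute a b) (hxy : AntiCommute x y) :
    AntiCommute (a ⊗ₜ[R] x) (b ⊗ₜ[R] y) := by
  rw [AntiCommute, Algebra.TensorProduct.tmul_mul_tmul, Algebra.TensorProduct.tmul_mul_tmul,
    hab.eq, ← tmul_add, hxy, tmul_zero]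

section OrthonormalBasis

variable {R M N : Type*} [CommRing R] [AddCommGroup M] [Module R M] [AddCommGroup N] [Module R N]
  {B : LinearMap.BilinForm R M} {W : Submodule R M} {I : Type*} [Fintype I] [DecidableEq I]
  {X : Module.Basis I R W}

theorem sum_apply_smul_basis_of_mem (hX : ∀ i j, B (X i) (X j) = if i = j then 1 else 0)
    {u : M} (hu : u ∈ W) : ∑ i, B (X i) u • (X i : M) = u := by
  lift u to W using hu
  have hexpand : (u : M) = ∑ i, X.repr u i • (X i : M) := by
    conv_lhs => rw [← X.sum_repr u]
    simp only [Submodule.coe_sum, Submodule.coe_smul]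
  have hcoord : ∀ k, B (X k) u = X.repr u k := fun k => by
    simp [hexpand, hX]
  simp_rw [hcoord, ← hexpand]

-- The Casimir tensor `∑ i, X i ⊗ X i` of `W` is annihilated by the skew-adjoint `f`.
theorem LinearMap.IsSkewAdjoint.sum_apply_map_basis
    (hX : ∀ i j, B (X i) (X j) = if i = j then 1 else 0) (hB : B.IsSymm) {f : M → M}
    (hf : B.IsSkewAdjoint f) (hfW : Set.MapsTo f W W) (F : M →ₗ[R] M →ₗ[R] N) :
    ∑ i, F (f (X i)) (X i) = -∑ i, F (X i) (f (X i)) := by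
  have hskew : ∀ i k, B (X k) (f (X i)) = -B (X i) (f (X k)) := fun i k => by
    rw [hB.eq, hf, Pi.neg_apply, map_neg]
  calc ∑ i, F (f (X i)) (X i)
      = ∑ i, F (∑ k, B (X k) (f (X i)) • (X k : M)) (X i) :=
        Finset.sum_congr rfl fun i _ => by rw [sum_apply_smul_basis_of_mem hX (hfW (X i).2)]
    _ = ∑ k, F (X k) (∑ i, B (X k) (f (X i)) • (X i : M)) := by
        simp only [map_sum, map_smul, LinearMap.sum_apply, LinearMap.smul_apply]
        exact Finset.sum_comm
    _ = -∑ k, F (X k) (f (X k)) := by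
        rw [← Finset.sum_neg_distrib]
        refine Finset.sum_congr rfl fun k _ => ?_
        simp only [hskew _ k, neg_smul, Finset.sum_neg_distrib, map_neg,
          sum_apply_smul_basis_of_mem hX (hfW (X k).2)]

theorem LinearMap.IsSkewAdjoint.sum_smul_map_basis
    (hX : ∀ i j, B (X i) (X j) = if i = j then 1 else 0) (hB : B.IsSymm) {f : M → M}
    (hf : B.IsSkewAdjoint f) (hfW : Set.MapsTo f W W) (v : M) (φ : M →ₗ[R] N) :
    ∑ i, B (X i) v • φ (f (X i)) = -∑ i, B (f (X i)) v • φ (X i) := by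
  rw [eq_neg_iff_add_eq_zero, add_comm, ← eq_neg_iff_add_eq_zero]
  exact hf.sum_apply_map_basis hX hB hfW ((LinearMap.lsmul R N).compl₁₂ (B.flip v) φ)

end OrthonormalBasis

section InvariantForm

variable {K L : Type*} [CommRing K] [LieRing L] [LieAlgebra K L] {B : LinearMap.BilinForm K L}

namespace LinearMap.BilinForm.lieInvariant

theorem isSkewAdjoint_lie (hBi : B.lieInvariant L) (y : L) : B.IsSkewAdjoint (⁅y, ·⁆) :=
  fun a b => by rw [hBi, Pi.neg_apply, map_neg]

theorem apply_lie_cyclic (hBi : B.lieInvariant L) (hB : B.IsSymm) (a b c : L) :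
    B a ⁅b, c⁆ = B b ⁅c, a⁆ := by
  rw [hB.eq, ← lie_skew, map_neg, LinearMap.neg_apply, hBi, neg_neg]

theorem lie_cyclic_sum (hBi : B.lieInvariant L) (hB : B.IsSymm) (y a b c : L) :
    B ⁅y, a⁆ ⁅b, c⁆ + B ⁅y, b⁆ ⁅c, a⁆ + B ⁅y, c⁆ ⁅a, b⁆ = 0 := by
  have h₁ : B ⁅y, a⁆ ⁅b, c⁆ = -B a ⁅y, ⁅b, c⁆⁆ := hBi _ _ _
  have h₂ : B ⁅y, b⁆ ⁅c, a⁆ = B a ⁅⁅y, b⁆, c⁆ := (apply_lie_cyclic hBi hB a _ _).symm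
  have h₃ : B ⁅y, c⁆ ⁅a, b⁆ = B a ⁅b, ⁅y, c⁆⁆ := by
    rw [apply_lie_cyclic hBi hB a, apply_lie_cyclic hBi hB b]
  rw [h₁, h₂, h₃, leibniz_lie, map_add]
  ring

end LinearMap.BilinForm.lieInvariant

end InvariantForm

section Clifford

variable {K L : Type*} [Field K] [LieRing L] [LieAlgebra K L] {B : LinearMap.BilinForm K L}

local notation "γ" => CliffordAlgebra.ι (LinearMap.BilinMap.toQuadraticMap B)

theorem CliffordAlgebra.ι_mul_ι_add_swap_of_isSymm (hB : B.IsSymm) (a b : L) :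
    γ a * γ b + γ b * γ a = algebraMap K _ (2 * B a b) := by
  rw [ι_mul_ι_add_swap, LinearMap.BilinMap.polar_toQuadraticMap, hB.eq b a, two_mul]

theorem CliffordAlgebra.antiCommute_ι (hB : B.IsSymm) {a b : L} (h : B a b = 0) :
    AntiCommute (γ a) (γ b) := by
  rw [AntiCommute, ι_mul_ι_add_swap_of_isSymm hB, h, mul_zero, map_zero]

theorem CliffordAlgebra.ι_mul_ι_mul_ι_sub (hB : B.IsSymm) (a b u : L) :
    γ a * γ b * γ u - γ u * (γ a * γ b) = (2 * B b u) • γ a - (2 * B a u) • γ b := by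
  calc γ a * γ b * γ u - γ u * (γ a * γ b)
      = γ a * (γ b * γ u + γ u * γ b) - (γ a * γ u + γ u * γ a) * γ b := by noncomm_ring
    _ = _ := by
      rw [ι_mul_ι_add_swap_of_isSymm hB, ι_mul_ι_add_swap_of_isSymm hB, Algebra.smul_def,
        Algebra.smul_def, ← Algebra.commutes (2 * B b u) (γ a)]

variable {I : Type*} [Fintype I]

-- The paper's `ν(y)`, computed in `C(𝔤)` for an orthonormal basis `X` of `𝔥^⊥`.
noncomputable def spinLift (B : LinearMap.BilinForm K L) (X : I → L) (y : L) :
    CliffordAlgebra B.toQuadraticMap :=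
  (1 / 4 : K) • ∑ i, ι B.toQuadraticMap ⁅y, X i⁆ * ι B.toQuadraticMap (X i)

-- `v_{𝔤/𝔥}` and `v_𝔥` are this element for orthonormal bases of `𝔥^⊥` and of `𝔥`.
noncomputable def cubicElement (B : LinearMap.BilinForm K L) (X : I → L) :
    CliffordAlgebra B.toQuadraticMap :=
  (-(1 / 12 : K)) • ∑ i, ∑ j, ∑ k, B (X i) ⁅X j, X k⁆ •
    (ι B.toQuadraticMap (X i) * ι B.toQuadraticMap (X j) * ι B.toQuadraticMap (X k))

theorem antiCommute_cubicElement {X : I → L} {a : CliffordAlgebra B.toQuadraticMap}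
    (h : ∀ i, AntiCommute a (γ (X i))) : AntiCommute a (cubicElement B X) :=
  .smul_right _ <| .sum_right _ fun i _ => .sum_right _ fun j _ => .sum_right _ fun k _ =>
    .smul_right _ <| ((h i).commute_mul_right (h j)).antiCommute_mul_right (h k)

variable [DecidableEq I] {W : Submodule K L} {X : Module.Basis I K W}

theorem spinLift_mul_ι_sub_ι_mul_spinLift [CharZero K]
    (hX : ∀ i j, B (X i) (X j) = if i = j then 1 else 0) (hB : B.IsSymm)
    (hBi : B.lieInvariant L) {y u : L} (hu : u ∈ W) (hyu : ⁅y, u⁆ ∈ W) :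
    spinLift B (fun i => (X i : L)) y * γ u - γ u * spinLift B (fun i => (X i : L)) y
      = γ ⁅y, u⁆ := by
  have h₁ : ∑ i, B (X i) u • γ ⁅y, (X i : L)⁆ = γ ⁅y, u⁆ := by
    conv_rhs => rw [← sum_apply_smul_basis_of_mem hX hu]
    simp only [lie_sum, lie_smul, map_sum, map_smul]
  have h₂ : ∑ i, B ⁅y, (X i : L)⁆ u • γ (X i) = -γ ⁅y, u⁆ := by
    have hinv : ∀ i, B ⁅y, (X i : L)⁆ u = -B (X i) ⁅y, u⁆ := fun i => hBi _ _ _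
    simp_rw [hinv, neg_smul, Finset.sum_neg_distrib, ← map_smul, ← map_sum,
      sum_apply_smul_basis_of_mem hX hyu]
  calc _ = (1 / 4 : K) • ∑ i, (γ ⁅y, (X i : L)⁆ * γ (X i) * γ u
          - γ u * (γ ⁅y, (X i : L)⁆ * γ (X i))) := by
        simp only [spinLift, smul_mul_assoc, mul_smul_comm, Finset.sum_mul, Finset.mul_sum,
          ← smul_sub, Finset.sum_sub_distrib]
    _ = (1 / 4 : K) • ((2 : K) • ∑ i, B (X i) u • γ ⁅y, (X i : L)⁆
          - (2 : K) • ∑ i, B ⁅y, (X i : L)⁆ u • γ (X i)) := by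
        simp only [ι_mul_ι_mul_ι_sub hB, Finset.sum_sub_distrib, Finset.smul_sum, smul_smul]
    _ = γ ⁅y, u⁆ := by
        rw [h₁, h₂]
        module

theorem sum_smul_ι_lie_derivation_eq_zero (hX : ∀ i j, B (X i) (X j) = if i = j then 1 else 0)
    (hB : B.IsSymm) (hBi : B.lieInvariant L) {y : L} (hy : Set.MapsTo (⁅y, ·⁆) (W : Set L) W) :
    ∑ i, ∑ j, ∑ k, B (X i) ⁅(X j : L), (X k : L)⁆ •
      (γ ⁅y, (X i : L)⁆ * (γ (X j) * γ (X k)) + γ (X i) * (γ ⁅y, (X j : L)⁆ * γ (X k))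
        + γ (X i) * (γ (X j) * γ ⁅y, (X k : L)⁆)) = 0 := by
  have hf := hBi.isSkewAdjoint_lie y
  have hcyc := hBi.apply_lie_cyclic hB
  have slot₁ : ∑ i, ∑ j, ∑ k,
      (B (X i) ⁅(X j : L), (X k : L)⁆ • (γ ⁅y, (X i : L)⁆ * (γ (X j) * γ (X k)))
        + B ⁅y, (X i : L)⁆ ⁅(X j : L), (X k : L)⁆ • (γ (X i) * (γ (X j) * γ (X k)))) = 0 := by
    rw [Finset.sum_comm]
    refine Finset.sum_eq_zero fun j _ => ?_
    rw [Finset.sum_comm]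
    refine Finset.sum_eq_zero fun k _ => ?_
    rw [Finset.sum_add_distrib]
    exact eq_neg_iff_add_eq_zero.mp (hf.sum_smul_map_basis hX hB hy ⁅(X j : L), (X k : L)⁆
      ((LinearMap.mulRight K (γ (X j) * γ (X k))).comp (ι _)))
  have slot₂ : ∑ i, ∑ j, ∑ k,
      (B (X i) ⁅(X j : L), (X k : L)⁆ • (γ (X i) * (γ ⁅y, (X j : L)⁆ * γ (X k)))
        + B ⁅y, (X j : L)⁆ ⁅(X k : L), (X i : L)⁆ • (γ (X i) * (γ (X j) * γ (X k)))) = 0 := by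
    refine Finset.sum_eq_zero fun i _ => ?_
    rw [Finset.sum_comm]
    refine Finset.sum_eq_zero fun k _ => ?_
    simp only [hcyc (X i : L), Finset.sum_add_distrib]
    exact eq_neg_iff_add_eq_zero.mp (hf.sum_smul_map_basis hX hB hy ⁅(X k : L), (X i : L)⁆
      ((LinearMap.mulLeft K (γ (X i))).comp ((LinearMap.mulRight K (γ (X k))).comp (ι _))))
  have slot₃ : ∑ i, ∑ j, ∑ k,
      (B (X i) ⁅(X j : L), (X k : L)⁆ • (γ (X i) * (γ (X j) * γ ⁅y, (X k : L)⁆))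
        + B ⁅y, (X k : L)⁆ ⁅(X i : L), (X j : L)⁆ • (γ (X i) * (γ (X j) * γ (X k)))) = 0 := by
    refine Finset.sum_eq_zero fun i _ => Finset.sum_eq_zero fun j _ => ?_
    simp only [hcyc (X i : L), hcyc (X j : L), Finset.sum_add_distrib]
    exact eq_neg_iff_add_eq_zero.mp (hf.sum_smul_map_basis hX hB hy ⁅(X i : L), (X j : L)⁆
      ((LinearMap.mulLeft K (γ (X i))).comp ((LinearMap.mulLeft K (γ (X j))).comp (ι _))))
  have hsum := congr($slot₁ + $slot₂ + $slot₃)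
  rw [add_zero, add_zero, ← Finset.sum_add_distrib, ← Finset.sum_add_distrib] at hsum
  rw [← hsum]
  refine Finset.sum_congr rfl fun i _ => ?_
  simp only [← Finset.sum_add_distrib]
  refine Finset.sum_congr rfl fun j _ => Finset.sum_congr rfl fun k _ => ?_
  -- the three coefficients produced above sum to zero by `ad y`-invariance of `B(a, [b, c])`
  rw [eq_neg_of_add_eq_zero_right (hBi.lie_cyclic_sum hB y (X i) (X j) (X k))]
  module

theorem commute_cubicElement (hX : ∀ i j, B (X i) (X j) = if i = j then 1 else 0)
    (hB : B.IsSymm) (hBi : B.lieInvariant L) {y : L} (hy : Set.MapsTo (⁅y, ·⁆) (W : Set L) W)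
    {N : CliffordAlgebra B.toQuadraticMap}
    (hN : ∀ i, N * γ (X i) - γ (X i) * N = γ ⁅y, (X i : L)⁆) :
    Commute N (cubicElement B (fun i => (X i : L))) := by
  have hder : ∀ a b c : CliffordAlgebra B.toQuadraticMap, N * (a * b * c) - a * b * c * N
      = (N * a - a * N) * (b * c) + a * ((N * b - b * N) * c) + a * (b * (N * c - c * N)) :=
    fun a b c => by noncomm_ring
  refine Commute.smul_right (sub_eq_zero.mp ?_) _
  calc _ = ∑ i, ∑ j, ∑ k, B (X i) ⁅(X j : L), (X k : L)⁆ •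
          (N * (γ (X i) * γ (X j) * γ (X k)) - γ (X i) * γ (X j) * γ (X k) * N) := by
        simp only [Finset.mul_sum, Finset.sum_mul, mul_smul_comm, smul_mul_assoc, smul_sub,
          Finset.sum_sub_distrib]
    _ = 0 := by
        simp only [hder, hN]
        exact sum_smul_ι_lie_derivation_eq_zero hX hB hBi hy

end Clifford

section Dirac

attribute [local instance] LieRing.ofAssociativeRing

theorem UniversalEnvelopingAlgebra.ι_lie {R L : Type*} [CommRing R] [LieRing L] [LieAlgebra R L]
    (a b : L) :
    UniversalEnvelopingAlgebra.ι R ⁅a, b⁆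
      = UniversalEnvelopingAlgebra.ι R a * UniversalEnvelopingAlgebra.ι R b
        - UniversalEnvelopingAlgebra.ι R b * UniversalEnvelopingAlgebra.ι R a := by
  rw [LieHom.map_lie, LieRing.of_associative_ring_bracket]

variable {K L : Type*} [Field K] [LieRing L] [LieAlgebra K L] {B : LinearMap.BilinForm K L}
  {I : Type*} [Fintype I] [DecidableEq I] {W : Submodule K L} {X : Module.Basis I K W}

local notation "γ" => CliffordAlgebra.ι (LinearMap.BilinMap.toQuadraticMap B)
local notation "e" => UniversalEnvelopingAlgebra.ι K

theorem antiCommute_sum_ι_tmul_ι (hX : ∀ i j, B (X i) (X j) = if i = j then 1 else 0)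
    (hB : B.IsSymm) (hBi : B.lieInvariant L) {y : L} (hy : Set.MapsTo (⁅y, ·⁆) (W : Set L) W)
    (horth : ∀ i, AntiCommute (γ (X i)) (γ y)) {N : CliffordAlgebra B.toQuadraticMap}
    (hN : ∀ i, N * γ (X i) - γ (X i) * N = γ ⁅y, (X i : L)⁆) :
    AntiCommute (∑ i, e (X i : L) ⊗ₜ[K] γ (X i)) (e y ⊗ₜ[K] γ y + 1 ⊗ₜ[K] (N * γ y)) := by
  let F : L →ₗ[K] L →ₗ[K] UniversalEnvelopingAlgebra K L ⊗[K] CliffordAlgebra B.toQuadraticMap :=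
    (TensorProduct.mk K _ _).compl₁₂ (UniversalEnvelopingAlgebra.ι K (L := L)).toLinearMap
      ((LinearMap.mulRight K (γ y)).comp (ι _))
  have hterm : ∀ i, (e (X i : L) ⊗ₜ[K] γ (X i)) * (e y ⊗ₜ[K] γ y + 1 ⊗ₜ[K] (N * γ y))
      + (e y ⊗ₜ[K] γ y + 1 ⊗ₜ[K] (N * γ y)) * (e (X i : L) ⊗ₜ[K] γ (X i))
      = -(F ⁅y, (X i : L)⁆ (X i) + F (X i) ⁅y, (X i : L)⁆) := by
    intro i
    have hyx : γ y * γ (X i) = -(γ (X i) * γ y) := eq_neg_of_add_eq_zero_left (horth i).symm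
    simp only [F, LinearMap.compl₁₂_apply, TensorProduct.mk_apply, LinearMap.comp_apply,
      LinearMap.mulRight_apply, LieHom.coe_toLinearMap, UniversalEnvelopingAlgebra.ι_lie, ← hN i,
      mul_add, add_mul, Algebra.TensorProduct.tmul_mul_tmul, one_mul, mul_one, sub_mul, mul_assoc,
      hyx, sub_tmul, tmul_sub, tmul_neg, mul_neg]
    abel
  rw [AntiCommute, Finset.sum_mul, Finset.mul_sum, ← Finset.sum_add_distrib]
  simp only [hterm, Finset.sum_neg_distrib, Finset.sum_add_distrib,
    (hBi.isSkewAdjoint_lie y).sum_apply_map_basis hX hB hy F, neg_add_cancel, neg_zero]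

end Dirac

theorem map_inclIsometry_ι {L : Type*} [AddCommGroup L] [Module ℂ L]
    (B : LinearMap.BilinForm ℂ L) (W : Submodule ℂ L) (w : W) :
    CliffordAlgebra.map (inclIsometry B W) (ι (restrictedQF B W) w) = ι B.toQuadraticMap (w : L) :=
  map_apply_ι _ _

theorem dirac_components_anticommute_general {L : Type*} [LieRing L] [LieAlgebra ℂ L]
    (B : LinearMap.BilinForm ℂ L)
    (hB_symm : ∀ x y : L, B x y = B y x)
    (hB_inv : ∀ x y z : L, B ⁅x, y⁆ z + B y ⁅x, z⁆ = 0)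
    (H : LieSubalgebra ℂ L)
    (Hp : Submodule ℂ L)
    (hHp : ∀ x : L, x ∈ Hp ↔ ∀ y ∈ H, B y x = 0)
    (hstab : ∀ (y : H) (x : Hp), ⁅(y : L), (x : L)⁆ ∈ Hp)
    {I : Type*} [Fintype I] [DecidableEq I] (X : Module.Basis I ℂ Hp)
    (hX : ∀ i j, B (X i : L) (X j : L) = if i = j then 1 else 0)
    {J : Type*} [Fintype J] (Y : Module.Basis J ℂ H)
    -- the cubic element `v_{𝔤/𝔥}` of `C(𝔥^⊥)`
    (v : CliffordAlgebra (restrictedQF B Hp))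
    (hv : v = (-(1/12 : ℂ)) • ∑ i : I, ∑ j : I, ∑ k : I,
        B (X i : L) ⁅(X j : L), (X k : L)⁆ •
          (ι (restrictedQF B Hp) (X i) * ι (restrictedQF B Hp) (X j) *
            ι (restrictedQF B Hp) (X k)))
    -- the cubic element `v_𝔥` of `C(𝔥)`
    (vh : CliffordAlgebra (restrictedQF B H.toSubmodule))
    (hvh : vh = (-(1/12 : ℂ)) • ∑ j : J, ∑ k : J, ∑ l : J,
        B (Y j : L) ⁅(Y k : L), (Y l : L)⁆ •
          (ι (restrictedQF B H.toSubmodule) (Y j) * ι (restrictedQF B H.toSubmodule) (Y k) *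
            ι (restrictedQF B H.toSubmodule) (Y l)))
    (ν : H → CliffordAlgebra (restrictedQF B Hp))
    (hν : ∀ y : H, ν y = (1/4 : ℂ) • ∑ i : I,
        ι (restrictedQF B Hp) ⟨⁅(y : L), (X i : L)⁆, hstab y (X i)⟩ *
          ι (restrictedQF B Hp) (X i))
    (D' D'' : UniversalEnvelopingAlgebra ℂ L ⊗[ℂ] CliffordAlgebra B.toQuadraticMap)
    (hD' : D' = ∑ i : I,
        (UniversalEnvelopingAlgebra.ι ℂ (X i : L)) ⊗ₜ[ℂ]
          (CliffordAlgebra.map (inclIsometry B Hp) (ι (restrictedQF B Hp) (X i)))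
        + 1 ⊗ₜ[ℂ] (CliffordAlgebra.map (inclIsometry B Hp) v))
    (hD'' : D'' = ∑ j : J,
        ((UniversalEnvelopingAlgebra.ι ℂ (Y j : L)) ⊗ₜ[ℂ] 1
          + 1 ⊗ₜ[ℂ] (CliffordAlgebra.map (inclIsometry B Hp) (ν (Y j))))
        * (1 ⊗ₜ[ℂ] (CliffordAlgebra.map (inclIsometry B H.toSubmodule)
            (ι (restrictedQF B H.toSubmodule) (Y j))))
        + 1 ⊗ₜ[ℂ] (CliffordAlgebra.map (inclIsometry B H.toSubmodule) vh)) :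
    D' * D'' + D'' * D' = 0 := by
  have hB : B.IsSymm := ⟨hB_symm⟩
  have hBi : B.lieInvariant L := fun x y z => eq_neg_of_add_eq_zero_left (hB_inv x y z)
  have hstabY : ∀ j, Set.MapsTo (⁅(Y j : L), ·⁆) (Hp : Set L) Hp :=
    fun j u hu => hstab (Y j) ⟨u, hu⟩
  have hXY : ∀ i j, AntiCommute (ι B.toQuadraticMap (X i : L)) (ι B.toQuadraticMap (Y j : L)) :=
    fun i j => antiCommute_ι hB (by rw [hB_symm]; exact (hHp _).1 (X i).2 _ (Y j).2)
  have hN : ∀ j i, spinLift B (fun i => (X i : L)) (Y j) * ι _ (X i : L)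
      - ι _ (X i : L) * spinLift B (fun i => (X i : L)) (Y j) = ι _ ⁅(Y j : L), (X i : L)⁆ :=
    fun j i => spinLift_mul_ι_sub_ι_mul_spinLift hX hB hBi (X i).2 (hstabY j (X i).2)
  set Φ := cubicElement B (fun i => (X i : L))
  set Ψ := cubicElement B (fun j => (Y j : L))
  have hΦY : ∀ j, AntiCommute Φ (ι _ (Y j : L)) :=
    fun j => (antiCommute_cubicElement fun i => (hXY i j).symm).symm
  have hXΨ : ∀ i, AntiCommute (ι _ (X i : L)) Ψ := fun i => antiCommute_cubicElement (hXY i)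
  have hΦΨ : AntiCommute Φ Ψ := antiCommute_cubicElement hΦY
  have hNΦ : ∀ j, Commute Φ (spinLift B (fun i => (X i : L)) (Y j)) :=
    fun j => (commute_cubicElement hX hB hBi (hstabY j) (hN j)).symm
  have hD'C : D' = ∑ i, UniversalEnvelopingAlgebra.ι ℂ (X i : L) ⊗ₜ ι _ (X i : L) + 1 ⊗ₜ Φ := by
    simp only [hD', hv, Φ, cubicElement, map_smul, map_sum, map_mul, map_inclIsometry_ι]
  have hD''C : D'' = ∑ j, (UniversalEnvelopingAlgebra.ι ℂ (Y j : L) ⊗ₜ ι _ (Y j : L)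
      + 1 ⊗ₜ (spinLift B (fun i => (X i : L)) (Y j) * ι _ (Y j : L))) + 1 ⊗ₜ Ψ := by
    simp only [hD'', hvh, hν, Ψ, cubicElement, spinLift, map_smul, map_sum, map_mul,
      map_inclIsometry_ι, add_mul, Algebra.TensorProduct.tmul_mul_tmul, one_mul, mul_one]
  rw [hD'C, hD''C]
  refine AntiCommute.add_left (.add_right ?_ ?_) (.add_right ?_ ?_)
  · exact .sum_right _ fun j _ => antiCommute_sum_ι_tmul_ι hX hB hBi (hstabY j) (hXY · j) (hN j)
  · exact .symm <| .sum_right _ fun i _ => (Commute.one_left _).antiCommute_tmul (hXΨ i).symm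
  · exact .sum_right _ fun j _ => ((Commute.one_left _).antiCommute_tmul (hΦY j)).add_right
      ((Commute.one_left 1).antiCommute_tmul ((hNΦ j).antiCommute_mul_right (hΦY j)))
  · exact (Commute.one_left 1).antiCommute_tmul hΦΨ

/-- Anticommutation lemma: the components `D'` and `D''` of the decomposition
`D_𝔤 = D' + D''` anticommute: `D'·D'' + D''·D' = 0`. -/
theorem dirac_components_anticommute {L : Type*} [LieRing L] [LieAlgebra ℂ L]
    [FiniteDimensional ℂ L]
    (B : LinearMap.BilinForm ℂ L)
    (hB_symm : ∀ x y : L, B x y = B y x)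
    (hB_inv : ∀ x y z : L, B ⁅x, y⁆ z + B y ⁅x, z⁆ = 0)
    (hB_nd : B.Nondegenerate)
    (H : LieSubalgebra ℂ L)
    (hB_nd_H : ∀ y ∈ H, (∀ z ∈ H, B y z = 0) → y = 0)
    (Hp : Submodule ℂ L)
    (hHp : ∀ x : L, x ∈ Hp ↔ ∀ y ∈ H, B y x = 0)
    (hcompl : IsCompl H.toSubmodule Hp)
    (hstab : ∀ (y : H) (x : Hp), ⁅(y : L), (x : L)⁆ ∈ Hp)
    {I : Type*} [Fintype I] [DecidableEq I] (X : Module.Basis I ℂ Hp)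
    (hX : ∀ i j, B (X i : L) (X j : L) = if i = j then 1 else 0)
    {J : Type*} [Fintype J] [DecidableEq J] (Y : Module.Basis J ℂ H)
    (hY : ∀ i j, B (Y i : L) (Y j : L) = if i = j then 1 else 0)
    -- the cubic element `v_{𝔤/𝔥}` of `C(𝔥^⊥)`
    (v : CliffordAlgebra (restrictedQF B Hp))
    (hv : v = (-(1/12 : ℂ)) • ∑ i : I, ∑ j : I, ∑ k : I,
        B (X i : L) ⁅(X j : L), (X k : L)⁆ •
          (ι (restrictedQF B Hp) (X i) * ι (restrictedQF B Hp) (X j) *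
            ι (restrictedQF B Hp) (X k)))
    -- the cubic element `v_𝔥` of `C(𝔥)`
    (vh : CliffordAlgebra (restrictedQF B H.toSubmodule))
    (hvh : vh = (-(1/12 : ℂ)) • ∑ j : J, ∑ k : J, ∑ l : J,
        B (Y j : L) ⁅(Y k : L), (Y l : L)⁆ •
          (ι (restrictedQF B H.toSubmodule) (Y j) * ι (restrictedQF B H.toSubmodule) (Y k) *
            ι (restrictedQF B H.toSubmodule) (Y l)))
    (ν : H → CliffordAlgebra (restrictedQF B Hp))
    (hν : ∀ y : H, ν y = (1/4 : ℂ) • ∑ i : I,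
        ι (restrictedQF B Hp) ⟨⁅(y : L), (X i : L)⁆, hstab y (X i)⟩ *
          ι (restrictedQF B Hp) (X i))
    (D' D'' : UniversalEnvelopingAlgebra ℂ L ⊗[ℂ] CliffordAlgebra B.toQuadraticMap)
    (hD' : D' = ∑ i : I,
        (UniversalEnvelopingAlgebra.ι ℂ (X i : L)) ⊗ₜ[ℂ]
          (CliffordAlgebra.map (inclIsometry B Hp) (ι (restrictedQF B Hp) (X i)))
        + 1 ⊗ₜ[ℂ] (CliffordAlgebra.map (inclIsometry B Hp) v))
    (hD'' : D'' = ∑ j : J,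
        ((UniversalEnvelopingAlgebra.ι ℂ (Y j : L)) ⊗ₜ[ℂ] 1
          + 1 ⊗ₜ[ℂ] (CliffordAlgebra.map (inclIsometry B Hp) (ν (Y j))))
        * (1 ⊗ₜ[ℂ] (CliffordAlgebra.map (inclIsometry B H.toSubmodule)
            (ι (restrictedQF B H.toSubmodule) (Y j))))
        + 1 ⊗ₜ[ℂ] (CliffordAlgebra.map (inclIsometry B H.toSubmodule) vh)) :
    D' * D'' + D'' * D' = 0 :=
  dirac_components_anticommute_general B hB_symm hB_inv H Hp hHp hstab X hX Y v hv vh hvh ν hν D'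
    D'' hD' hD''
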